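/- arXiv:2203.16892 — 2 statements merged into one kernel-verified Lean document; each statement's English description precedes it below -/
import Mathlib

section
/- Let G > 0, C₀, α₂, ξ be real constants with C₀ + ξ ≠ 0 and α₂ ≠ 3, take γ = 0, and set x₂ = −(C₀+ξ)/((α₂−3)·8πG). Define ω_eff(x,y) = −1 − (α₂−3)/3 − C₀/(24πG·x) + (γ−1)·y/(24πG·x) and Ω_tt(x,y) = (8πG·C₀)/(3·(8πG)²·x) + α₂/3 + y/(24πG·x). Then ω_eff(x₂, ξ) = −1 and Ω_tt(x₂, ξ) = 1. -/
open Real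

/-- At the fixed point `F₂ = (−(C₀+ξ)/((α₂−3)·8πG), ξ)` of the Case I system with
`γ = 0`, the effective equation of state is `ω_eff = −1` and `Ω_tt = 1`. -/
theorem stmt10 (G C₀ α₂ ξ γ : ℝ) (hG : 0 < G) (hCξ : C₀ + ξ ≠ 0) (hα : α₂ ≠ 3)
    (hγ : γ = 0) :
    let x₂ : ℝ := -(C₀ + ξ) / ((α₂ - 3) * (8 * π * G))
    let ωeff : ℝ → ℝ → ℝ := fun x y =>
      -1 - (α₂ - 3) / 3 - C₀ / (24 * π * G * x) + (γ - 1) * y / (24 * π * G * x)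
    let Ωtt : ℝ → ℝ → ℝ := fun x y =>
      (8 * π * G * C₀) / (3 * (8 * π * G) ^ 2 * x) + α₂ / 3 + y / (24 * π * G * x)
    ωeff x₂ ξ = -1 ∧ Ωtt x₂ ξ = 1 := by
  intro x₂ ωeff Ωtt
  have hπ : (π : ℝ) ≠ 0 := Real.pi_ne_zero
  have hG' : G ≠ 0 := hG.ne'
  have hα' : α₂ - 3 ≠ 0 := sub_ne_zero.mpr hα
  have hx : x₂ ≠ 0 := by
    simp only [x₂]
    exact div_ne_zero (neg_ne_zero.mpr hCξ)
      (mul_ne_zero hα' (by positivity))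
  have hd : 24 * π * G * x₂ = -3 * (C₀ + ξ) / (α₂ - 3) := by
    simp only [x₂]; field_simp; ring
  constructor
  · show -1 - (α₂ - 3) / 3 - C₀ / (24 * π * G * x₂) + (γ - 1) * ξ / (24 * π * G * x₂) = -1
    rw [hd, hγ]
    field_simp
    ring
  · show (8 * π * G * C₀) / (3 * (8 * π * G) ^ 2 * x₂) + α₂ / 3 + ξ / (24 * π * G * x₂) = 1
    have h2 : 3 * (8 * π * G) ^ 2 * x₂ = (8 * π * G) * (24 * π * G * x₂) := by ring
    have h8 : (8:ℝ) * π * G ≠ 0 := by positivity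
    rw [h2, hd]
    field_simp
    ring
end

section
/- Let α₂ be a real constant and l a nonzero real constant, set a = 6 + (8π/3 − 2)·α₂ and b = (8π/3 − 2)·α₂ + 6 − 16π/3, and let M_S be the 3×3 real matrix M_S = [[3−α₂, 3 − (9 + (8π/3−2)·α₂)·l², −b·l²], [0, −a + 3/l², −b], [0, a − 3/l², b]]. Then the real spectrum of M_S equals {3−α₂, 0, 3/l² − 16π/3}. -/
open Real

/-- The Jacobian matrix `M_S` of the Case III system at the fixed point `S`
(with exact coefficients `a = 6 + (8π/3−2)α₂`, `b = (8π/3−2)α₂ + 6 − 16π/3`)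
has real spectrum `{3−α₂, 0, 3/l² − 16π/3}`. -/
theorem stmt19 (α₂ l : ℝ) (hl : l ≠ 0) :
    let a : ℝ := 6 + (8 * π / 3 - 2) * α₂
    let b : ℝ := (8 * π / 3 - 2) * α₂ + 6 - 16 * π / 3
    let M : Matrix (Fin 3) (Fin 3) ℝ :=
      !![3 - α₂, 3 - (9 + (8 * π / 3 - 2) * α₂) * l ^ 2, -b * l ^ 2;
         0, -a + 3 / l ^ 2, -b;
         0, a - 3 / l ^ 2, b]
    spectrum ℝ M = {3 - α₂, 0, 3 / l ^ 2 - 16 * π / 3} := by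
  intro a b M
  have hl2 : l ^ 2 ≠ 0 := pow_ne_zero _ hl
  ext μ
  rw [spectrum.mem_iff, Matrix.isUnit_iff_isUnit_det, isUnit_iff_ne_zero, not_ne_iff]
  have hM : (algebraMap ℝ (Matrix (Fin 3) (Fin 3) ℝ)) μ - M
      = !![μ - (3 - α₂), -(3 - (9 + (8 * π / 3 - 2) * α₂) * l ^ 2), -(-b * l ^ 2);
           0, μ - (-a + 3 / l ^ 2), -(-b);
           0, -(a - 3 / l ^ 2), μ - b] := by
    ext i j
    fin_cases i <;> fin_cases j <;>
      simp [M, Matrix.algebraMap_matrix_apply, Matrix.vecHead, Matrix.vecTail]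
  have hdet : ((algebraMap ℝ (Matrix (Fin 3) (Fin 3) ℝ)) μ - M).det
      = (μ - (3 - α₂)) * (μ * (μ - (3 / l ^ 2 - 16 * π / 3))) := by
    rw [hM]
    simp [Matrix.det_fin_three, Matrix.vecHead, Matrix.vecTail]
    field_simp [a, b]
    ring
  rw [hdet]
  simp only [Set.mem_insert_iff, Set.mem_singleton_iff, mul_eq_zero, sub_eq_zero]
end
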